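/- arXiv:1607.07667 — 5 statements merged into one kernel-verified Lean document; each statement's English description precedes it below -/
import Mathlib

section
/- Let A' and A'' be graded-commutative unital algebras over a field F, and let A = A' ⊗ A'' with the graded tensor product multiplication. Then the s-th zero-divisor cup-length of A is at least the sum of the s-th zero-divisor cup-lengths of A' and A''; that is, zcl_s(A) ≥ zcl_s(A') + zcl_s(A''), where zcl_s(B) denotes the maximal number of elements in the kernel of the iterated multiplication map μ_s : B^{⊗s} → B whose product is nonzero. -/
open scoped TensorProduct

/-- The iterated multiplication `μ_s : A^{⊗s} → A`. -/
noncomputable def muS (F : Type*) [Field F] (A : Type*) [Ring A] [Algebra F A] (s : ℕ) :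
    (⨂[F] _ : Fin s, A) →ₗ[F] A :=
  PiTensorProduct.lift (MultilinearMap.mkPiAlgebraFin F s A)

/-- A bilinear multiplication `m` on `A^{⊗s}` is the *Koszul-signed* (graded tensor product)
multiplication with respect to a grading `𝒜` of `A` if on pure tensors of homogeneous elements
it is slotwise multiplication twisted by the usual Koszul sign. -/
def IsKoszulMul (F : Type*) [Field F] {A : Type*} [Ring A] [Algebra F A]
    (𝒜 : ℕ → Submodule F A) {s : ℕ}
    (m : (⨂[F] _ : Fin s, A) →ₗ[F] (⨂[F] _ : Fin s, A) →ₗ[F] ⨂[F] _ : Fin s, A) : Prop :=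
  ∀ (da db : Fin s → ℕ) (a b : Fin s → A), (∀ i, a i ∈ 𝒜 (da i)) → (∀ i, b i ∈ 𝒜 (db i)) →
    m (PiTensorProduct.tprod F a) (PiTensorProduct.tprod F b) =
      ((-1 : F) ^ (∑ ij : Fin s × Fin s, if ij.1 < ij.2 then db ij.1 * da ij.2 else 0)) •
        PiTensorProduct.tprod F (fun i => a i * b i)

/-- `zcl_s(A) ≥ t`: there are `t` elements of the kernel of `μ_s : A^{⊗s} → A` (i.e. `s`-th
zero-divisors of `A`) whose product — taken with respect to the multiplication `m` on
`A^{⊗s}` — is nonzero. -/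
def HasZclGE (F : Type*) [Field F] {A : Type*} [Ring A] [Algebra F A] (s : ℕ)
    (m : (⨂[F] _ : Fin s, A) →ₗ[F] (⨂[F] _ : Fin s, A) →ₗ[F] ⨂[F] _ : Fin s, A)
    (t : ℕ) : Prop :=
  ∃ z : Fin t → ⨂[F] _ : Fin s, A,
    (∀ k, muS F A s (z k) = 0) ∧
      (List.ofFn z).foldr (fun a b => m a b)
        (PiTensorProduct.tprod F (fun _ : Fin s => (1 : A))) ≠ 0

/-- The natural `ℕ`-grading on the graded tensor product `𝒜 ᵍ⊗[F] ℬ`. -/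
noncomputable def gtGrading (F : Type*) [Field F] {A' A'' : Type*} [Ring A'] [Ring A'']
    [Algebra F A'] [Algebra F A''] (𝒜 : ℕ → Submodule F A') (ℬ : ℕ → Submodule F A'')
    [GradedAlgebra 𝒜] [GradedAlgebra ℬ] (k : ℕ) : Submodule F (𝒜 ᵍ⊗[F] ℬ) :=
  Submodule.span F {z | ∃ (i j : ℕ) (a : A') (b : A''),
    i + j = k ∧ a ∈ 𝒜 i ∧ b ∈ ℬ j ∧ z = GradedTensorProduct.of F 𝒜 ℬ (a ⊗ₜ[F] b)}

/-!
Let `P'` and `P''` be nonzero products of `s`-th zero-divisors `z'_k` of `A'` and `z''_k` of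
`A''`. The slotwise inclusions `a ↦ a ⊗ 1` and `b ↦ 1 ⊗ b` are graded algebra maps, so they
commute with `μ_s` and with the Koszul products; hence they carry the `z'_k` and `z''_k` to
`t' + t''` zero-divisors of `A' ⊗ A''` whose product is `(P' ⊗ 1)(1 ⊗ P'')`. This is nonzero: for
tensor bases built from homogeneous bases of `A'` and `A''`, the product of a basis tensor of
`A'^{⊗s} ⊗ 1` with one of `1 ⊗ A''^{⊗s}` is, up to sign, a basis tensor of `(A' ⊗ A'')^{⊗s}`,
and distinct pairs give distinct basis tensors. So a nonzero coordinate of `P'` times a nonzero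
coordinate of `P''` is, up to sign, a coordinate of the product.
-/

open PiTensorProduct Module GradedTensorProduct

section HomogeneousBasis

variable {F : Type*} [Field F] {A : Type*} [Ring A] [Algebra F A]
  (𝒜 : ℕ → Submodule F A) [GradedAlgebra 𝒜]

noncomputable def homogeneousBasis : Basis (Σ k, Basis.ofVectorSpaceIndex F (𝒜 k)) F A :=
  (DirectSum.Decomposition.isInternal 𝒜).collectedBasis fun k => Basis.ofVectorSpace F (𝒜 k)

theorem homogeneousBasis_mem (i : Σ k, Basis.ofVectorSpaceIndex F (𝒜 k)) :
    homogeneousBasis 𝒜 i ∈ 𝒜 i.1 :=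
  DirectSum.IsInternal.collectedBasis_mem _ _ i

variable (s : ℕ)

noncomputable def homogeneousTensorBasis :
    Basis (Fin s → Σ k, Basis.ofVectorSpaceIndex F (𝒜 k)) F (⨂[F] _ : Fin s, A) :=
  Basis.piTensorProduct fun _ => homogeneousBasis 𝒜

theorem homogeneousTensorBasis_apply (p : Fin s → Σ k, Basis.ofVectorSpaceIndex F (𝒜 k)) :
    homogeneousTensorBasis 𝒜 s p = tprod F fun i => homogeneousBasis 𝒜 (p i) :=
  Basis.piTensorProduct_apply _ p

end HomogeneousBasis

section Koszul

variable {s : ℕ}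

def koszulExp (da db : Fin s → ℕ) : ℕ :=
  ∑ ij : Fin s × Fin s, if ij.1 < ij.2 then db ij.1 * da ij.2 else 0

theorem koszulExp_add_left (da da' db : Fin s → ℕ) :
    koszulExp (da + da') db = koszulExp da db + koszulExp da' db := by
  simp only [koszulExp, ← Finset.sum_add_distrib, Pi.add_apply]
  refine Finset.sum_congr rfl fun ij _ => ?_
  split_ifs <;> ring

theorem koszulExp_add_right (da db db' : Fin s → ℕ) :
    koszulExp da (db + db') = koszulExp da db + koszulExp da db' := by
  simp only [koszulExp, ← Finset.sum_add_distrib, Pi.add_apply]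
  refine Finset.sum_congr rfl fun ij _ => ?_
  split_ifs <;> ring

@[simp]
theorem koszulExp_zero_left (db : Fin s → ℕ) : koszulExp 0 db = 0 := by
  simp [koszulExp]

variable {F : Type*} [Field F] {A : Type*} [Ring A] [Algebra F A] {𝒜 : ℕ → Submodule F A}
  {m : (⨂[F] _ : Fin s, A) →ₗ[F] (⨂[F] _ : Fin s, A) →ₗ[F] ⨂[F] _ : Fin s, A}

theorem IsKoszulMul.tprod_mul (hm : IsKoszulMul F 𝒜 m) {da db : Fin s → ℕ} {a b : Fin s → A}
    (ha : ∀ i, a i ∈ 𝒜 (da i)) (hb : ∀ i, b i ∈ 𝒜 (db i)) :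
    m (tprod F a) (tprod F b) = (-1 : F) ^ koszulExp da db • tprod F fun i => a i * b i :=
  hm da db a b ha hb

theorem IsKoszulMul.assoc_tprod [SetLike.GradedMonoid 𝒜] (hm : IsKoszulMul F 𝒜 m)
    {da db dc : Fin s → ℕ} {a b c : Fin s → A} (ha : ∀ i, a i ∈ 𝒜 (da i))
    (hb : ∀ i, b i ∈ 𝒜 (db i)) (hc : ∀ i, c i ∈ 𝒜 (dc i)) :
    m (m (tprod F a) (tprod F b)) (tprod F c) = m (tprod F a) (m (tprod F b) (tprod F c)) := by
  have hab i : a i * b i ∈ 𝒜 ((da + db) i) := SetLike.mul_mem_graded (ha i) (hb i)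
  have hbc i : b i * c i ∈ 𝒜 ((db + dc) i) := SetLike.mul_mem_graded (hb i) (hc i)
  rw [hm.tprod_mul ha hb, hm.tprod_mul hb hc, map_smul, LinearMap.smul_apply, map_smul,
    hm.tprod_mul hab hc, hm.tprod_mul ha hbc, smul_smul, smul_smul, ← pow_add, ← pow_add,
    koszulExp_add_left, koszulExp_add_right]
  simp only [mul_assoc]
  congr 2
  ring

theorem IsKoszulMul.one_mul [GradedAlgebra 𝒜] (hm : IsKoszulMul F 𝒜 m)
    (x : ⨂[F] _ : Fin s, A) : m (tprod F fun _ => 1) x = x := by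
  suffices m (tprod F fun _ => 1) = LinearMap.id from LinearMap.congr_fun this x
  refine (homogeneousTensorBasis 𝒜 s).ext fun p => ?_
  rw [homogeneousTensorBasis_apply, hm.tprod_mul (da := 0) (fun _ => SetLike.one_mem_graded 𝒜)
    (fun i => homogeneousBasis_mem 𝒜 (p i)), koszulExp_zero_left, pow_zero, one_smul]
  simp only [_root_.one_mul, LinearMap.id_apply]

end Koszul

section TensorPowMap

variable {F : Type*} [Field F] {A B C : Type*} [Ring A] [Ring B] [Ring C]
  [Algebra F A] [Algebra F B] [Algebra F C] {s : ℕ}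

variable (s) in
noncomputable def tensorPowMap (f : A →ₐ[F] B) :
    (⨂[F] _ : Fin s, A) →ₗ[F] ⨂[F] _ : Fin s, B :=
  PiTensorProduct.map fun _ => f.toLinearMap

theorem tensorPowMap_tprod (f : A →ₐ[F] B) (a : Fin s → A) :
    tensorPowMap s f (tprod F a) = tprod F fun i => f (a i) :=
  PiTensorProduct.map_tprod _ a

theorem tensorPowMap_one (f : A →ₐ[F] B) :
    tensorPowMap s f (tprod F fun _ => (1 : A)) = tprod F fun _ => (1 : B) := by
  simp only [tensorPowMap_tprod, map_one]

theorem muS_tprod (a : Fin s → A) : muS F A s (tprod F a) = (List.ofFn a).prod := by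
  simp [muS]

theorem muS_tensorPowMap (f : A →ₐ[F] B) (x : ⨂[F] _ : Fin s, A) :
    muS F B s (tensorPowMap s f x) = f (muS F A s x) := by
  induction x using PiTensorProduct.induction_on with
  | smul_tprod r a =>
    rw [map_smul, map_smul, map_smul, tensorPowMap_tprod, muS_tprod, muS_tprod, map_smul,
      map_list_prod, List.map_ofFn]
    rfl
  | add x y hx hy => rw [map_add, map_add, map_add, hx, hy, map_add]

variable {𝒜 : ℕ → Submodule F A} {ℬ : ℕ → Submodule F B} {𝒞 : ℕ → Submodule F C}
  {mA : (⨂[F] _ : Fin s, A) →ₗ[F] (⨂[F] _ : Fin s, A) →ₗ[F] ⨂[F] _ : Fin s, A}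
  {mB : (⨂[F] _ : Fin s, B) →ₗ[F] (⨂[F] _ : Fin s, B) →ₗ[F] ⨂[F] _ : Fin s, B}
  {mC : (⨂[F] _ : Fin s, C) →ₗ[F] (⨂[F] _ : Fin s, C) →ₗ[F] ⨂[F] _ : Fin s, C}

theorem IsKoszulMul.tensorPowMap_mul [GradedAlgebra 𝒜] (hmA : IsKoszulMul F 𝒜 mA)
    (hmC : IsKoszulMul F 𝒞 mC) (f : A →ₐ[F] C) (hf : ∀ k, ∀ a ∈ 𝒜 k, f a ∈ 𝒞 k)
    (x y : ⨂[F] _ : Fin s, A) :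
    tensorPowMap s f (mA x y) = mC (tensorPowMap s f x) (tensorPowMap s f y) := by
  suffices mA.compr₂ (tensorPowMap s f) = (mC ∘ₗ tensorPowMap s f).compl₂ (tensorPowMap s f) from
    LinearMap.congr_fun₂ this x y
  refine LinearMap.ext_basis (homogeneousTensorBasis 𝒜 s) (homogeneousTensorBasis 𝒜 s)
    fun p q => ?_
  have hp i : homogeneousBasis 𝒜 (p i) ∈ 𝒜 (p i).1 := homogeneousBasis_mem 𝒜 (p i)
  have hq i : homogeneousBasis 𝒜 (q i) ∈ 𝒜 (q i).1 := homogeneousBasis_mem 𝒜 (q i)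
  simp only [LinearMap.compl₂_apply, LinearMap.comp_apply, LinearMap.compr₂_apply,
    homogeneousTensorBasis_apply, tensorPowMap_tprod]
  rw [hmA.tprod_mul hp hq, hmC.tprod_mul (fun i => hf _ _ (hp i)) (fun i => hf _ _ (hq i)),
    map_smul, tensorPowMap_tprod]
  simp only [map_mul]

theorem IsKoszulMul.assoc_tensorPowMap [GradedAlgebra 𝒜] [GradedAlgebra ℬ]
    [SetLike.GradedMonoid 𝒞] (hm : IsKoszulMul F 𝒞 mC) (f : A →ₐ[F] C)
    (hf : ∀ k, ∀ a ∈ 𝒜 k, f a ∈ 𝒞 k) (g : B →ₐ[F] C) (hg : ∀ k, ∀ b ∈ ℬ k, g b ∈ 𝒞 k)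
    (x y : ⨂[F] _ : Fin s, A) (z : ⨂[F] _ : Fin s, B) :
    mC (mC (tensorPowMap s f x) (tensorPowMap s f y)) (tensorPowMap s g z) =
      mC (tensorPowMap s f x) (mC (tensorPowMap s f y) (tensorPowMap s g z)) := by
  let bA := homogeneousTensorBasis 𝒜 s
  suffices ((mC ∘ₗ tensorPowMap s f).compl₂ (tensorPowMap s f)).compr₂
      (mC.flip (tensorPowMap s g z)) =
      (mC ∘ₗ tensorPowMap s f).compl₂ (mC.flip (tensorPowMap s g z) ∘ₗ tensorPowMap s f) from
    LinearMap.congr_fun₂ this x y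
  refine LinearMap.ext_basis bA bA fun p q => ?_
  suffices mC (mC (tensorPowMap s f (bA p)) (tensorPowMap s f (bA q))) ∘ₗ tensorPowMap s g =
      mC (tensorPowMap s f (bA p)) ∘ₗ mC (tensorPowMap s f (bA q)) ∘ₗ tensorPowMap s g from
    LinearMap.congr_fun this z
  refine (homogeneousTensorBasis ℬ s).ext fun r => ?_
  simp only [LinearMap.comp_apply, bA, homogeneousTensorBasis_apply, tensorPowMap_tprod]
  exact hm.assoc_tprod (fun i => hf _ _ (homogeneousBasis_mem 𝒜 (p i)))
    (fun i => hf _ _ (homogeneousBasis_mem 𝒜 (q i)))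
    (fun i => hg _ _ (homogeneousBasis_mem ℬ (r i)))

theorem IsKoszulMul.foldr_map_tensorPowMap [GradedAlgebra 𝒜] (hmA : IsKoszulMul F 𝒜 mA)
    (hmC : IsKoszulMul F 𝒞 mC) (f : A →ₐ[F] C) (hf : ∀ k, ∀ a ∈ 𝒜 k, f a ∈ 𝒞 k)
    (l : List (⨂[F] _ : Fin s, A)) :
    (l.map (tensorPowMap s f)).foldr (fun a b => mC a b) (tprod F fun _ => 1) =
      tensorPowMap s f (l.foldr (fun a b => mA a b) (tprod F fun _ => 1)) := by
  rw [List.foldr_map, ← tensorPowMap_one f]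
  exact List.foldr_hom _ fun x y => (hmA.tensorPowMap_mul hmC f hf x y).symm

theorem IsKoszulMul.foldr_map_tensorPowMap_of_tensorPowMap [GradedAlgebra 𝒜] [GradedAlgebra ℬ]
    [SetLike.GradedMonoid 𝒞] (hmA : IsKoszulMul F 𝒜 mA) (hmB : IsKoszulMul F ℬ mB)
    (hmC : IsKoszulMul F 𝒞 mC) (f : A →ₐ[F] C) (hf : ∀ k, ∀ a ∈ 𝒜 k, f a ∈ 𝒞 k)
    (g : B →ₐ[F] C) (hg : ∀ k, ∀ b ∈ ℬ k, g b ∈ 𝒞 k)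
    (l : List (⨂[F] _ : Fin s, A)) (w : ⨂[F] _ : Fin s, B) :
    (l.map (tensorPowMap s f)).foldr (fun a b => mC a b) (tensorPowMap s g w) =
      mC (tensorPowMap s f (l.foldr (fun a b => mA a b) (tprod F fun _ => 1)))
        (tensorPowMap s g w) := by
  induction l with
  | nil =>
    rw [List.map_nil, List.foldr_nil, List.foldr_nil, tensorPowMap_one, ← tensorPowMap_one g,
      ← hmB.tensorPowMap_mul hmC g hg, hmB.one_mul]
  | cons x l ih =>
    rw [List.map_cons, List.foldr_cons, List.foldr_cons, ih, ← hmC.assoc_tensorPowMap f hf g hg,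
      hmA.tensorPowMap_mul hmC f hf]

end TensorPowMap

section GradedTensorProduct

variable {F : Type*} [Field F] {A B : Type*} [Ring A] [Ring B] [Algebra F A] [Algebra F B]
  {𝒜 : ℕ → Submodule F A} {ℬ : ℕ → Submodule F B} [GradedAlgebra 𝒜] [GradedAlgebra ℬ]

theorem tmul_mem_gtGrading {i j : ℕ} {a : A} {b : B} (ha : a ∈ 𝒜 i) (hb : b ∈ ℬ j) :
    a ᵍ⊗ₜ[F] b ∈ gtGrading F 𝒜 ℬ (i + j) :=
  Submodule.subset_span ⟨i, j, a, b, rfl, ha, hb, rfl⟩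

theorem includeLeft_mem_gtGrading {k : ℕ} {a : A} (ha : a ∈ 𝒜 k) :
    includeLeft 𝒜 ℬ a ∈ gtGrading F 𝒜 ℬ k := by
  rw [includeLeft_apply, ← add_zero k]
  exact tmul_mem_gtGrading ha (SetLike.one_mem_graded ℬ)

theorem includeRight_mem_gtGrading {k : ℕ} {b : B} (hb : b ∈ ℬ k) :
    includeRight 𝒜 ℬ b ∈ gtGrading F 𝒜 ℬ k := by
  rw [includeRight_apply, ← zero_add k]
  exact tmul_mem_gtGrading (SetLike.one_mem_graded 𝒜) hb

theorem tmul_mul_tmul_mem_gtGrading {i₁ j₁ i₂ j₂ : ℕ} {a₁ a₂ : A} {b₁ b₂ : B}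
    (ha₁ : a₁ ∈ 𝒜 i₁) (hb₁ : b₁ ∈ ℬ j₁) (ha₂ : a₂ ∈ 𝒜 i₂) (hb₂ : b₂ ∈ ℬ j₂) :
    a₁ ᵍ⊗ₜ[F] b₁ * a₂ ᵍ⊗ₜ[F] b₂ ∈ gtGrading F 𝒜 ℬ (i₁ + j₁ + (i₂ + j₂)) := by
  rw [tmul_coe_mul_coe_tmul 𝒜 ℬ a₁ ⟨b₁, hb₁⟩ ⟨a₂, ha₂⟩ b₂, Units.smul_def]
  refine zsmul_mem ?_ _
  rw [show i₁ + j₁ + (i₂ + j₂) = i₁ + i₂ + (j₁ + j₂) by ring]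
  exact tmul_mem_gtGrading (SetLike.mul_mem_graded ha₁ ha₂) (SetLike.mul_mem_graded hb₁ hb₂)

instance : SetLike.GradedMonoid (gtGrading F 𝒜 ℬ) where
  one_mem := by
    rw [← of_one, Algebra.TensorProduct.one_def, ← add_zero 0]
    exact tmul_mem_gtGrading (SetLike.one_mem_graded 𝒜) (SetLike.one_mem_graded ℬ)
  mul_mem i j x y hx hy := by
    induction hx using Submodule.span_induction with
    | mem x hx =>
      induction hy using Submodule.span_induction with
      | mem y hy =>
        obtain ⟨i₁, j₁, a₁, b₁, rfl, ha₁, hb₁, rfl⟩ := hx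
        obtain ⟨i₂, j₂, a₂, b₂, rfl, ha₂, hb₂, rfl⟩ := hy
        exact tmul_mul_tmul_mem_gtGrading ha₁ hb₁ ha₂ hb₂
      | zero => simp
      | add y y' _ _ hy hy' => rw [mul_add]; exact add_mem hy hy'
      | smul c y _ hy => rw [mul_smul_comm]; exact Submodule.smul_mem _ c hy
    | zero => simp
    | add x x' _ _ hx hx' => rw [add_mul]; exact add_mem hx hx'
    | smul c x _ hx => rw [smul_mul_assoc]; exact Submodule.smul_mem _ c hx

variable (𝒜 ℬ) (s : ℕ)

noncomputable def gtTensorBasis :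
    Basis (Fin s → (Σ k, Basis.ofVectorSpaceIndex F (𝒜 k)) × Σ k, Basis.ofVectorSpaceIndex F (ℬ k))
      F (⨂[F] _ : Fin s, 𝒜 ᵍ⊗[F] ℬ) :=
  Basis.piTensorProduct fun _ =>
    ((homogeneousBasis 𝒜).tensorProduct (homogeneousBasis ℬ)).map (of F 𝒜 ℬ)

theorem gtTensorBasis_apply (p : Fin s → Σ k, Basis.ofVectorSpaceIndex F (𝒜 k))
    (q : Fin s → Σ k, Basis.ofVectorSpaceIndex F (ℬ k)) :
    gtTensorBasis 𝒜 ℬ s (fun i => (p i, q i)) =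
      tprod F fun i => includeLeft 𝒜 ℬ (homogeneousBasis 𝒜 (p i)) *
        includeRight 𝒜 ℬ (homogeneousBasis ℬ (q i)) := by
  simp only [gtTensorBasis, Basis.piTensorProduct_apply, Basis.map_apply,
    Basis.tensorProduct_apply, includeLeft_apply, includeRight_apply, tmul_one_mul_one_tmul]

variable {𝒜 ℬ s}
  {m : (⨂[F] _ : Fin s, 𝒜 ᵍ⊗[F] ℬ) →ₗ[F]
    (⨂[F] _ : Fin s, 𝒜 ᵍ⊗[F] ℬ) →ₗ[F] ⨂[F] _ : Fin s, 𝒜 ᵍ⊗[F] ℬ}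

theorem IsKoszulMul.gtTensorBasis_repr_includeLeft_mul_includeRight
    (hm : IsKoszulMul F (gtGrading F 𝒜 ℬ) m) (x : ⨂[F] _ : Fin s, A) (y : ⨂[F] _ : Fin s, B)
    (p : Fin s → Σ k, Basis.ofVectorSpaceIndex F (𝒜 k))
    (q : Fin s → Σ k, Basis.ofVectorSpaceIndex F (ℬ k)) :
    (gtTensorBasis 𝒜 ℬ s).repr
        (m (tensorPowMap s (includeLeft 𝒜 ℬ) x) (tensorPowMap s (includeRight 𝒜 ℬ) y))
        (fun i => (p i, q i)) =
      (-1) ^ koszulExp (fun i => (p i).1) (fun i => (q i).1) *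
        ((homogeneousTensorBasis 𝒜 s).repr x p * (homogeneousTensorBasis ℬ s).repr y q) := by
  let lhs := ((m ∘ₗ tensorPowMap s (includeLeft 𝒜 ℬ)).compl₂
    (tensorPowMap s (includeRight 𝒜 ℬ))).compr₂
      (Finsupp.lapply (fun i => (p i, q i)) ∘ₗ (gtTensorBasis 𝒜 ℬ s).repr.toLinearMap)
  let rhs := (-1 : F) ^ koszulExp (fun i => (p i).1) (fun i => (q i).1) •
    (LinearMap.mul F F).compl₁₂ (Finsupp.lapply p ∘ₗ (homogeneousTensorBasis 𝒜 s).repr.toLinearMap)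
      (Finsupp.lapply q ∘ₗ (homogeneousTensorBasis ℬ s).repr.toLinearMap)
  suffices lhs = rhs from LinearMap.congr_fun₂ this x y
  refine LinearMap.ext_basis (homogeneousTensorBasis 𝒜 s) (homogeneousTensorBasis ℬ s)
    fun p' q' => ?_
  simp only [lhs, rhs, LinearMap.compr₂_apply, LinearMap.compl₂_apply, LinearMap.comp_apply,
    LinearMap.smul_apply, LinearMap.compl₁₂_apply, LinearMap.mul_apply', LinearEquiv.coe_coe,
    Basis.repr_self, Finsupp.lapply_apply]
  rw [homogeneousTensorBasis_apply, homogeneousTensorBasis_apply, tensorPowMap_tprod,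
    tensorPowMap_tprod,
    hm.tprod_mul (fun i => includeLeft_mem_gtGrading (homogeneousBasis_mem 𝒜 (p' i)))
      (fun i => includeRight_mem_gtGrading (homogeneousBasis_mem ℬ (q' i))),
    ← gtTensorBasis_apply, map_smul, Basis.repr_self, Finsupp.smul_apply, smul_eq_mul]
  by_cases h : p' = p ∧ q' = q
  · obtain ⟨rfl, rfl⟩ := h
    simp
  have hpq : (fun i => (p' i, q' i)) ≠ fun i => (p i, q i) := fun h' =>
    h ⟨funext fun i => congrArg Prod.fst (congrFun h' i),
      funext fun i => congrArg Prod.snd (congrFun h' i)⟩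
  rcases not_and_or.mp h with hp | hq
  · simp [Finsupp.single_eq_of_ne' hpq, Finsupp.single_eq_of_ne' hp]
  · simp [Finsupp.single_eq_of_ne' hpq, Finsupp.single_eq_of_ne' hq]

theorem IsKoszulMul.includeLeft_mul_includeRight_ne_zero (hm : IsKoszulMul F (gtGrading F 𝒜 ℬ) m)
    {x : ⨂[F] _ : Fin s, A} {y : ⨂[F] _ : Fin s, B} (hx : x ≠ 0) (hy : y ≠ 0) :
    m (tensorPowMap s (includeLeft 𝒜 ℬ) x) (tensorPowMap s (includeRight 𝒜 ℬ) y) ≠ 0 := by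
  obtain ⟨p, hp⟩ : ∃ p, (homogeneousTensorBasis 𝒜 s).repr x p ≠ 0 := by
    by_contra! h
    exact hx ((homogeneousTensorBasis 𝒜 s).ext_elem fun p => by simp [h])
  obtain ⟨q, hq⟩ : ∃ q, (homogeneousTensorBasis ℬ s).repr y q ≠ 0 := by
    by_contra! h
    exact hy ((homogeneousTensorBasis ℬ s).ext_elem fun q => by simp [h])
  intro h0
  have h := hm.gtTensorBasis_repr_includeLeft_mul_includeRight x y p q
  rw [h0, map_zero, Finsupp.zero_apply] at h
  exact mul_ne_zero (pow_ne_zero _ (neg_ne_zero.mpr one_ne_zero)) (mul_ne_zero hp hq) h.symm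

end GradedTensorProduct

theorem stmt0_general (F : Type*) [Field F] (A' A'' : Type*) [Ring A'] [Ring A'']
    [Algebra F A'] [Algebra F A'']
    (𝒜 : ℕ → Submodule F A') (ℬ : ℕ → Submodule F A'')
    [GradedAlgebra 𝒜] [GradedAlgebra ℬ]
    (s : ℕ)
    (m' : (⨂[F] _ : Fin s, A') →ₗ[F] (⨂[F] _ : Fin s, A') →ₗ[F] ⨂[F] _ : Fin s, A')
    (hm' : IsKoszulMul F 𝒜 m')
    (m'' : (⨂[F] _ : Fin s, A'') →ₗ[F] (⨂[F] _ : Fin s, A'') →ₗ[F] ⨂[F] _ : Fin s, A'')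
    (hm'' : IsKoszulMul F ℬ m'')
    (m : (⨂[F] _ : Fin s, 𝒜 ᵍ⊗[F] ℬ) →ₗ[F]
      (⨂[F] _ : Fin s, 𝒜 ᵍ⊗[F] ℬ) →ₗ[F] ⨂[F] _ : Fin s, 𝒜 ᵍ⊗[F] ℬ)
    (hm : IsKoszulMul F (gtGrading F 𝒜 ℬ) m)
    (t' t'' : ℕ)
    (h' : HasZclGE F s m' t') (h'' : HasZclGE F s m'' t'') :
    HasZclGE F s m (t' + t'') := by
  obtain ⟨z', hz'_ker, hz'_ne⟩ := h'
  obtain ⟨z'', hz''_ker, hz''_ne⟩ := h''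
  have hl : ∀ k, ∀ a ∈ 𝒜 k, includeLeft 𝒜 ℬ a ∈ gtGrading F 𝒜 ℬ k :=
    fun _ _ => includeLeft_mem_gtGrading
  have hr : ∀ k, ∀ b ∈ ℬ k, includeRight 𝒜 ℬ b ∈ gtGrading F 𝒜 ℬ k :=
    fun _ _ => includeRight_mem_gtGrading
  refine ⟨Fin.append (tensorPowMap s (includeLeft 𝒜 ℬ) ∘ z')
    (tensorPowMap s (includeRight 𝒜 ℬ) ∘ z''), fun k => ?_, ?_⟩
  · refine Fin.addCases (fun i => ?_) (fun i => ?_) k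
    · rw [Fin.append_left, Function.comp_apply, muS_tensorPowMap, hz'_ker, map_zero]
    · rw [Fin.append_right, Function.comp_apply, muS_tensorPowMap, hz''_ker, map_zero]
  · rw [List.ofFn_fin_append, List.foldr_append, ← List.map_ofFn, ← List.map_ofFn,
      hm''.foldr_map_tensorPowMap hm _ hr,
      hm'.foldr_map_tensorPowMap_of_tensorPowMap hm'' hm _ hl _ hr]
    exact hm.includeLeft_mul_includeRight_ne_zero hz'_ne hz''_ne

/-- Let `A'`, `A''` be graded-commutative unital algebras over a field `F`
and let `A = A' ⊗ A''` be their graded tensor product (with Koszul-signed multiplication).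
Then `zcl_s(A) ≥ zcl_s(A') + zcl_s(A'')`, where all products of `s`-th zero-divisors are
taken with respect to the Koszul-signed multiplications on the `s`-fold tensor powers. -/
theorem stmt0 (F : Type*) [Field F] (A' A'' : Type*) [Ring A'] [Ring A'']
    [Algebra F A'] [Algebra F A'']
    (𝒜 : ℕ → Submodule F A') (ℬ : ℕ → Submodule F A'')
    [GradedAlgebra 𝒜] [GradedAlgebra ℬ]
    (hcomm' : ∀ (i j : ℕ) (a b : A'), a ∈ 𝒜 i → b ∈ 𝒜 j →
      a * b = ((-1 : F) ^ (i * j)) • (b * a))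
    (hcomm'' : ∀ (i j : ℕ) (a b : A''), a ∈ ℬ i → b ∈ ℬ j →
      a * b = ((-1 : F) ^ (i * j)) • (b * a))
    (s : ℕ) (hs : 2 ≤ s)
    (m' : (⨂[F] _ : Fin s, A') →ₗ[F] (⨂[F] _ : Fin s, A') →ₗ[F] ⨂[F] _ : Fin s, A')
    (hm' : IsKoszulMul F 𝒜 m')
    (m'' : (⨂[F] _ : Fin s, A'') →ₗ[F] (⨂[F] _ : Fin s, A'') →ₗ[F] ⨂[F] _ : Fin s, A'')
    (hm'' : IsKoszulMul F ℬ m'')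
    (m : (⨂[F] _ : Fin s, 𝒜 ᵍ⊗[F] ℬ) →ₗ[F]
      (⨂[F] _ : Fin s, 𝒜 ᵍ⊗[F] ℬ) →ₗ[F] ⨂[F] _ : Fin s, 𝒜 ᵍ⊗[F] ℬ)
    (hm : IsKoszulMul F (gtGrading F 𝒜 ℬ) m)
    (t' t'' : ℕ)
    (h' : HasZclGE F s m' t') (h'' : HasZclGE F s m'' t'') :
    HasZclGE F s m (t' + t'') :=
  stmt0_general F A' A'' 𝒜 ℬ s m' hm' m'' hm'' m hm t' t'' h' h''
end

section
/- In A_g (g ≥ 2, n ≥ 2), for 2 ≤ j ≤ n the following relations hold: x_1·(x_j y_j) = x_1 ω_j + ω_1 x_j and y_1·(x_j y_j) = y_1 ω_j + ω_1 y_j. -/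
/-- Generators of the rational cohomology of the `n`-fold power of a genus-`g` surface:
`a i p`, `b i p` in degree 1 and `w i` (the class `ω_i`) in degree 2.  The indices are
`0`-based: `a i p` stands for the class `a_{i+1}(p+1)` of the paper. -/
inductive SurfGen (n g : ℕ) : Type
  | a (i : Fin n) (p : Fin g)
  | b (i : Fin n) (p : Fin g)
  | w (i : Fin n)

/-- The cohomological degree of a generator. -/
def SurfGen.deg {n g : ℕ} : SurfGen n g → ℕ
  | .a _ _ => 1
  | .b _ _ => 1
  | .w _ => 2

open FreeAlgebra in
/-- The defining relations of `H^*(Σ_g^{×n}; ℚ)`: within each factor,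
`a_i(p)a_i(q) = b_i(p)b_i(q) = 0`, `a_i(p)b_i(q) = δ_{pq} ω_i`, together with
graded (Koszul-signed) commutativity of the generators. -/
inductive SurfRel (n g : ℕ) :
    FreeAlgebra ℚ (SurfGen n g) → FreeAlgebra ℚ (SurfGen n g) → Prop
  | aa (i : Fin n) (p q : Fin g) :
      SurfRel n g (ι ℚ (SurfGen.a i p) * ι ℚ (SurfGen.a i q)) 0
  | bb (i : Fin n) (p q : Fin g) :
      SurfRel n g (ι ℚ (SurfGen.b i p) * ι ℚ (SurfGen.b i q)) 0
  | ab_eq (i : Fin n) (p : Fin g) :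
      SurfRel n g (ι ℚ (SurfGen.a i p) * ι ℚ (SurfGen.b i p)) (ι ℚ (SurfGen.w i))
  | ab_ne (i : Fin n) (p q : Fin g) : p ≠ q →
      SurfRel n g (ι ℚ (SurfGen.a i p) * ι ℚ (SurfGen.b i q)) 0
  | koszul (u v : SurfGen n g) :
      SurfRel n g (ι ℚ u * ι ℚ v)
        (((-1 : ℚ) ^ (u.deg * v.deg)) • (ι ℚ v * ι ℚ u))

/-- `H^*(Σ_g^{×n}; ℚ)`, presented by generators and relations. -/
def SurfCoh (n g : ℕ) : Type := RingQuot (SurfRel n g)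

noncomputable instance (n g : ℕ) : Ring (SurfCoh n g) :=
  inferInstanceAs (Ring (RingQuot (SurfRel n g)))

noncomputable instance (n g : ℕ) : Algebra ℚ (SurfCoh n g) :=
  inferInstanceAs (Algebra ℚ (RingQuot (SurfRel n g)))

/-- The class `a_{i+1}(p+1)`. -/
noncomputable def gA {n g : ℕ} (i : Fin n) (p : Fin g) : SurfCoh n g :=
  RingQuot.mkAlgHom ℚ (SurfRel n g) (FreeAlgebra.ι ℚ (SurfGen.a i p))

/-- The class `b_{i+1}(p+1)`. -/
noncomputable def gB {n g : ℕ} (i : Fin n) (p : Fin g) : SurfCoh n g :=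
  RingQuot.mkAlgHom ℚ (SurfRel n g) (FreeAlgebra.ι ℚ (SurfGen.b i p))

/-- The class `ω_{i+1}`. -/
noncomputable def gW {n g : ℕ} (i : Fin n) : SurfCoh n g :=
  RingQuot.mkAlgHom ℚ (SurfRel n g) (FreeAlgebra.ι ℚ (SurfGen.w i))

/-- The class `x_{i+1}(p+1)`: equal to `a_{i+1}(p+1)` unless `p+1 = 1` and `i+1 ≥ 2`, in which
case it is `a_{i+1}(1) - a_1(1)`. -/
noncomputable def gX {n g : ℕ} [NeZero n] [NeZero g] (i : Fin n) (p : Fin g) : SurfCoh n g :=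
  if p = 0 ∧ i ≠ 0 then gA i p - gA 0 p else gA i p

/-- The class `y_{i+1}(p+1)`: equal to `b_{i+1}(p+1)` unless `p+1 = 1` and `i+1 ≥ 2`, in which
case it is `b_{i+1}(1) - b_1(1)`. -/
noncomputable def gY {n g : ℕ} [NeZero n] [NeZero g] (i : Fin n) (p : Fin g) : SurfCoh n g :=
  if p = 0 ∧ i ≠ 0 then gB i p - gB 0 p else gB i p

/-- The relations defining the quotient algebra `A_g`: all products
`x_i(p)x_j(q)`, `x_i(p)y_j(q)`, `y_i(p)y_j(q)` with `p, q ≥ 2` and `i ≠ j` are set to zero. -/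
inductive ARel (n g : ℕ) [NeZero n] [NeZero g] : SurfCoh n g → SurfCoh n g → Prop
  | xx (i j : Fin n) (p q : Fin g) : i ≠ j → p ≠ 0 → q ≠ 0 → ARel n g (gX i p * gX j q) 0
  | xy (i j : Fin n) (p q : Fin g) : i ≠ j → p ≠ 0 → q ≠ 0 → ARel n g (gX i p * gY j q) 0
  | yy (i j : Fin n) (p q : Fin g) : i ≠ j → p ≠ 0 → q ≠ 0 → ARel n g (gY i p * gY j q) 0

/-- The algebra `A_g`: the quotient of `H^*(Σ_g^{×n}; ℚ)` by the ideal generated by the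
products `x_i(p)x_j(q)`, `x_i(p)y_j(q)`, `y_i(p)y_j(q)` with `p, q ≥ 2`, `i ≠ j`. -/
def SurfA (n g : ℕ) [NeZero n] [NeZero g] : Type := RingQuot (ARel n g)

noncomputable instance (n g : ℕ) [NeZero n] [NeZero g] : Ring (SurfA n g) :=
  inferInstanceAs (Ring (RingQuot (ARel n g)))

noncomputable instance (n g : ℕ) [NeZero n] [NeZero g] : Algebra ℚ (SurfA n g) :=
  inferInstanceAs (Algebra ℚ (RingQuot (ARel n g)))

/-- The quotient map `H^*(Σ_g^{×n}; ℚ) → A_g`. -/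
noncomputable def toA (n g : ℕ) [NeZero n] [NeZero g] : SurfCoh n g →ₐ[ℚ] SurfA n g :=
  RingQuot.mkAlgHom ℚ (ARel n g)

/-- The image of `x_{i+1} = x_{i+1}(1)` in `A_g`. -/
noncomputable def xA {n g : ℕ} [NeZero n] [NeZero g] (i : Fin n) : SurfA n g :=
  toA n g (gX i 0)

/-- The image of `y_{i+1} = y_{i+1}(1)` in `A_g`. -/
noncomputable def yA {n g : ℕ} [NeZero n] [NeZero g] (i : Fin n) : SurfA n g :=
  toA n g (gY i 0)

/-- The image of `ω_{i+1}` in `A_g`. -/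
noncomputable def wA {n g : ℕ} [NeZero n] [NeZero g] (i : Fin n) : SurfA n g :=
  toA n g (gW i)

/-!
Both identities already hold in `H^*(Σ_g^{×n}; ℚ)`, for any two factors `k`, `i` and any index
`p`. Expanding `(a_i - a_k)(b_i - b_k)` and multiplying by `a_k`, the terms containing `a_k a_k`
vanish, `a_k a_i b_i = a_k ω_i`, and graded commutativity gives
`a_k a_i b_k = -a_i ω_k = -ω_k a_i`, while `ω_k a_k = 0`; the case of `b_k` is symmetric.
-/

namespace SurfCoh

variable {n g : ℕ}

open FreeAlgebra

theorem mk_ι_mul_mk_ι (u v : SurfGen n g) :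
    RingQuot.mkAlgHom ℚ (SurfRel n g) (ι ℚ u) * RingQuot.mkAlgHom ℚ (SurfRel n g) (ι ℚ v) =
      (-1 : ℚ) ^ (u.deg * v.deg) •
        (RingQuot.mkAlgHom ℚ (SurfRel n g) (ι ℚ v) * RingQuot.mkAlgHom ℚ (SurfRel n g) (ι ℚ u)) := by
  simpa only [map_mul, map_smul] using RingQuot.mkAlgHom_rel ℚ (SurfRel.koszul u v)

theorem gA_mul_gA_self (i : Fin n) (p q : Fin g) : gA i p * gA i q = (0 : SurfCoh n g) := by
  have h := RingQuot.mkAlgHom_rel ℚ (SurfRel.aa i p q)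
  rw [map_mul, map_zero] at h
  exact h

theorem gB_mul_gB_self (i : Fin n) (p q : Fin g) : gB i p * gB i q = (0 : SurfCoh n g) := by
  have h := RingQuot.mkAlgHom_rel ℚ (SurfRel.bb i p q)
  rw [map_mul, map_zero] at h
  exact h

theorem gA_mul_gB_self (i : Fin n) (p : Fin g) : gA i p * gB i p = (gW i : SurfCoh n g) := by
  have h := RingQuot.mkAlgHom_rel ℚ (SurfRel.ab_eq i p)
  rw [map_mul] at h
  exact h

theorem gA_mul_gA_anticomm (i j : Fin n) (p q : Fin g) :
    gA i p * gA j q = -(gA j q * gA i p : SurfCoh n g) := by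
  have h := mk_ι_mul_mk_ι (SurfGen.a i p) (SurfGen.a j q)
  norm_num [SurfGen.deg] at h
  exact h

theorem gB_mul_gA_anticomm (i j : Fin n) (p q : Fin g) :
    gB i p * gA j q = -(gA j q * gB i p : SurfCoh n g) := by
  have h := mk_ι_mul_mk_ι (SurfGen.b i p) (SurfGen.a j q)
  norm_num [SurfGen.deg] at h
  exact h

theorem gW_mul_gA_comm (i j : Fin n) (q : Fin g) :
    gW i * gA j q = (gA j q * gW i : SurfCoh n g) := by
  have h := mk_ι_mul_mk_ι (SurfGen.w i) (SurfGen.a j q)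
  norm_num [SurfGen.deg] at h
  exact h

theorem gW_mul_gA_self (i : Fin n) (q : Fin g) : gW i * gA i q = (0 : SurfCoh n g) := by
  rw [← gA_mul_gB_self i q, mul_assoc, gB_mul_gA_anticomm, mul_neg, ← mul_assoc,
    gA_mul_gA_self, zero_mul, neg_zero]

theorem gW_mul_gB_self (i : Fin n) (q : Fin g) : gW i * gB i q = (0 : SurfCoh n g) := by
  rw [← gA_mul_gB_self i q, mul_assoc, gB_mul_gB_self, mul_zero]

theorem gA_mul_sub_mul_sub (i k : Fin n) (p : Fin g) :
    gA k p * ((gA i p - gA k p) * (gB i p - gB k p)) =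
      (gA k p * gW i + gW k * (gA i p - gA k p) : SurfCoh n g) := by
  have hik : gA k p * (gA i p * gB k p) = -(gW k * gA i p : SurfCoh n g) := by
    rw [← mul_assoc, gA_mul_gA_anticomm, neg_mul, mul_assoc, gA_mul_gB_self, ← gW_mul_gA_comm]
  have hkk (x : SurfCoh n g) : gA k p * (gA k p * x) = 0 := by
    rw [← mul_assoc, gA_mul_gA_self, zero_mul]
  rw [sub_mul, mul_sub, mul_sub, mul_sub, mul_sub, mul_sub, gA_mul_gB_self, hik, hkk, hkk,
    mul_sub, gW_mul_gA_self]
  abel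

theorem gB_mul_sub_mul_sub (i k : Fin n) (p : Fin g) :
    gB k p * ((gA i p - gA k p) * (gB i p - gB k p)) =
      (gB k p * gW i + gW k * (gB i p - gB k p) : SurfCoh n g) := by
  have hAk (x : Fin n) : gB k p * (gA x p * gB k p) = 0 := by
    rw [← mul_assoc, gB_mul_gA_anticomm, neg_mul, mul_assoc, gB_mul_gB_self, mul_zero, neg_zero]
  have hki : gB k p * (gA k p * gB i p) = -(gW k * gB i p : SurfCoh n g) := by
    rw [← mul_assoc, gB_mul_gA_anticomm, neg_mul, gA_mul_gB_self]
  rw [sub_mul, mul_sub, mul_sub, mul_sub, mul_sub, mul_sub, gA_mul_gB_self, hAk, hAk, hki,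
    mul_sub, gW_mul_gB_self]
  abel

end SurfCoh

section Basis

variable {n g : ℕ} [NeZero n] [NeZero g]

theorem gX_zero_zero : gX 0 0 = (gA 0 0 : SurfCoh n g) := by simp [gX]

theorem gY_zero_zero : gY 0 0 = (gB 0 0 : SurfCoh n g) := by simp [gY]

theorem gX_of_ne_zero {j : Fin n} (hj : j ≠ 0) : gX j 0 = (gA j 0 - gA 0 0 : SurfCoh n g) := by
  simp [gX, hj]

theorem gY_of_ne_zero {j : Fin n} (hj : j ≠ 0) : gY j 0 = (gB j 0 - gB 0 0 : SurfCoh n g) := by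
  simp [gY, hj]

end Basis

theorem stmt7_general (n g : ℕ) [NeZero n] [NeZero g] (j : Fin n) (hj : j ≠ 0) :
    xA 0 * (xA j * yA j) = (xA 0 * wA j + wA 0 * xA j : SurfA n g) ∧
      yA 0 * (xA j * yA j) = (yA 0 * wA j + wA 0 * yA j : SurfA n g) := by
  simp only [xA, yA, wA, gX_zero_zero, gY_zero_zero, gX_of_ne_zero hj, gY_of_ne_zero hj,
    ← map_mul, ← map_add]
  exact ⟨congrArg (toA n g) (SurfCoh.gA_mul_sub_mul_sub j 0 0),
    congrArg (toA n g) (SurfCoh.gB_mul_sub_mul_sub j 0 0)⟩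

/-- In `A_g` (`g ≥ 2`, `n ≥ 2`), for `2 ≤ j ≤ n`:
`x_1 (x_j y_j) = x_1 ω_j + ω_1 x_j` and `y_1 (x_j y_j) = y_1 ω_j + ω_1 y_j`. -/
theorem stmt7 (n g : ℕ) [NeZero n] [NeZero g] (hn : 2 ≤ n) (hg : 2 ≤ g)
    (j : Fin n) (hj : j ≠ 0) :
    xA 0 * (xA j * yA j) = (xA 0 * wA j + wA 0 * xA j : SurfA n g) ∧
      yA 0 * (xA j * yA j) = (yA 0 * wA j + wA 0 * yA j : SurfA n g) :=
  stmt7_general n g j hj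
end

section
/- In A_g (g ≥ 2, n ≥ 3), for distinct i, j ∈ {2,…,n}: y_i · (x_i y_j) = −ω_i y_j + ω_1 y_j − y_1 x_i y_j + x_1 y_i y_j. -/
section SurfCoh

variable {n g : ℕ}

theorem gB_mul_gA (i i' : Fin n) (p p' : Fin g) : gB i p * gA i' p' = -(gA i' p' * gB i p) := by
  have h := RingQuot.mkAlgHom_rel ℚ (SurfRel.koszul (SurfGen.b i p) (SurfGen.a i' p'))
  rw [map_mul, map_smul, map_mul] at h
  calc gB i p * gA i' p' = (-1 : ℚ) ^ (1 * 1) • (gA i' p' * gB i p) := h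
    _ = -(gA i' p' * gB i p) := by rw [mul_one, pow_one, neg_one_smul]

theorem gA_mul_gB_self (i : Fin n) (p : Fin g) : gA i p * gB i p = gW i := by
  have h := RingQuot.mkAlgHom_rel ℚ (SurfRel.ab_eq i p)
  rw [map_mul] at h
  exact h

/-- Both sides expand to `-ω_i - ω_1 + a_1 b_i + a_i b_1`, using only `b a = -a b` and
`a_k b_k = ω_k`. -/
theorem gY_mul_gX_of_ne_zero [NeZero n] [NeZero g] {i : Fin n} (hi : i ≠ 0) :
    gY i 0 * gX i 0 =
      -gW i + gW 0 - gY 0 0 * gX i 0 + gX 0 0 * gY (g := g) i 0 := by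
  have hX : gX (g := g) i 0 = gA i 0 - gA 0 0 := if_pos ⟨rfl, hi⟩
  have hY : gY (g := g) i 0 = gB i 0 - gB 0 0 := if_pos ⟨rfl, hi⟩
  have hX₀ : gX (n := n) (g := g) 0 0 = gA 0 0 := if_neg fun h => h.2 rfl
  have hY₀ : gY (n := n) (g := g) 0 0 = gB 0 0 := if_neg fun h => h.2 rfl
  simp only [hX, hY, hX₀, hY₀, mul_sub, sub_mul, gB_mul_gA, gA_mul_gB_self]
  abel

end SurfCoh

theorem stmt9_general (n g : ℕ) [NeZero n] [NeZero g]
    (i j : Fin n) (hi : i ≠ 0) :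
    yA i * (xA i * yA j) =
      (-(wA i * yA j) + wA 0 * yA j - yA 0 * xA i * yA j + xA 0 * yA i * yA j : SurfA n g) := by
  calc yA i * (xA i * yA j) = toA n g (gY i 0 * gX i 0) * yA j := by
        rw [map_mul, ← mul_assoc]; rfl
    _ = _ := by
        rw [gY_mul_gX_of_ne_zero hi]
        simp only [map_add, map_sub, map_neg, map_mul, add_mul, sub_mul, neg_mul]
        rfl

/-- In `A_g` (`g ≥ 2`, `n ≥ 3`), for distinct `i, j ∈ {2,…,n}`:
`y_i (x_i y_j) = -ω_i y_j + ω_1 y_j - y_1 x_i y_j + x_1 y_i y_j`. -/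
theorem stmt9 (n g : ℕ) [NeZero n] [NeZero g] (hn : 3 ≤ n) (hg : 2 ≤ g)
    (i j : Fin n) (hi : i ≠ 0) (hj : j ≠ 0) (hij : i ≠ j) :
    yA i * (xA i * yA j) =
      (-(wA i * yA j) + wA 0 * yA j - yA 0 * xA i * yA j + xA 0 * yA i * yA j : SurfA n g) :=
  stmt9_general n g i j hi
end

section
/- In A_g (g ≥ 2, n ≥ 3), for distinct i, j ∈ {2,…,n}: y_i x_j · (x_i y_j) = y_1 ω_i x_j + y_1 x_i ω_j − x_1 ω_i y_j − x_1 y_i ω_j + ω_1 y_i x_j − ω_1 x_i y_j. -/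
/-! All degree-one classes of `A_g` anticommute and every `ω_k` commutes with them. Writing
`a_k = x_k + x_1`, `b_k = y_k + y_1` in `a_k b_k = ω_k` gives, for `k ≥ 2`,
`x_k y_k = (ω_k - ω_1) + c_k` with `c_k = y_1 x_k - x_1 y_k`. The left-hand side equals
`(x_i y_i)(x_j y_j)`. In the expansion all products `ω_k ω_l` vanish, because
`ω_k ω_l = -a_k(2) a_l(2) b_k(2) b_l(2)` and `a_k(2) a_l(2) = 0` in `A_g`;
`ω_1` kills `c_k` since `ω_1 x_1 = ω_1 y_1 = 0`; and `c_i c_j = ω_1 (y_i x_j - x_i y_j)`. -/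

section

variable {n g : ℕ} [NeZero n] [NeZero g]

variable (n g) in
noncomputable def ofFree :
    FreeAlgebra ℚ (SurfGen n g) →ₐ[ℚ] SurfA n g :=
  (toA n g).comp (RingQuot.mkAlgHom ℚ (SurfRel n g) :
    FreeAlgebra ℚ (SurfGen n g) →ₐ[ℚ] SurfCoh n g)

noncomputable def genA (u : SurfGen n g) : SurfA n g :=
  ofFree n g (FreeAlgebra.ι ℚ u)

lemma ofFree_rel {x y : FreeAlgebra ℚ (SurfGen n g)} (h : SurfRel n g x y) :
    ofFree n g x = ofFree n g y :=
  congrArg (toA n g) (RingQuot.mkAlgHom_rel ℚ h)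

lemma wA_eq_genA (k : Fin n) : wA (g := g) k = genA (.w k) := rfl

lemma genA_mul_genA (u v : SurfGen n g) :
    genA u * genA v = ((-1 : ℚ) ^ (u.deg * v.deg)) • (genA v * genA u) := by
  simpa only [genA, map_mul, map_smul] using ofFree_rel (SurfRel.koszul u v)

lemma genA_a_mul_genA_a_self (k : Fin n) (p q : Fin g) :
    genA (.a k p) * genA (.a k q) = 0 := by
  simpa only [genA, map_mul, map_zero] using ofFree_rel (SurfRel.aa k p q)

lemma genA_b_mul_genA_b_self (k : Fin n) (p q : Fin g) :
    genA (.b k p) * genA (.b k q) = 0 := by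
  simpa only [genA, map_mul, map_zero] using ofFree_rel (SurfRel.bb k p q)

lemma genA_a_mul_genA_b_self (k : Fin n) (p : Fin g) :
    genA (.a k p) * genA (.b k p) = wA k := by
  rw [wA_eq_genA]
  simpa only [genA, map_mul] using ofFree_rel (SurfRel.ab_eq k p)

lemma genA_a_mul_genA_a_eq_zero {p : Fin g} (hp : p ≠ 0) (k l : Fin n) :
    genA (.a k p) * genA (.a l p) = 0 := by
  rcases eq_or_ne k l with rfl | hkl
  · exact genA_a_mul_genA_a_self k p p
  · have h := RingQuot.mkAlgHom_rel ℚ (ARel.xx k l p p hkl hp hp)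
    simp only [gX, hp, false_and, if_false, map_mul, map_zero] at h
    exact h

variable (n g) in
noncomputable def oddA : Submodule ℚ (SurfA n g) :=
  Submodule.span ℚ (genA '' {u | u.deg = 1})

lemma genA_mem_oddA {u : SurfGen n g} (hu : u.deg = 1) : genA u ∈ oddA n g :=
  Submodule.subset_span ⟨u, hu, rfl⟩

lemma mul_eq_neg_mul_of_mem_oddA {x y : SurfA n g} (hx : x ∈ oddA n g) (hy : y ∈ oddA n g) :
    x * y = -(y * x) := by
  induction hx, hy using Submodule.span_induction₂ with
  | mem_mem x y hx hy =>
    obtain ⟨u, hu : u.deg = 1, rfl⟩ := hx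
    obtain ⟨v, hv : v.deg = 1, rfl⟩ := hy
    rw [genA_mul_genA, hu, hv]
    simp
  | zero_left => simp
  | zero_right => simp
  | add_left x y z _ _ _ h₁ h₂ => rw [add_mul, mul_add, h₁, h₂, neg_add]
  | add_right x y z _ _ _ h₁ h₂ => rw [mul_add, add_mul, h₁, h₂, neg_add]
  | smul_left r x y _ _ h => rw [smul_mul_assoc, mul_smul_comm, h, smul_neg]
  | smul_right r x y _ _ h => rw [mul_smul_comm, smul_mul_assoc, h, smul_neg]

lemma mul_mul_eq_neg_mul_mul_of_mem_oddA (s : SurfA n g) {x y : SurfA n g}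
    (hx : x ∈ oddA n g) (hy : y ∈ oddA n g) : s * x * y = -(s * y * x) := by
  rw [mul_assoc, mul_eq_neg_mul_of_mem_oddA hx hy, mul_neg, mul_assoc]

lemma commute_wA_of_mem_oddA (k : Fin n) {x : SurfA n g} (hx : x ∈ oddA n g) :
    Commute (wA k) x := by
  have hle : oddA n g ≤ Subalgebra.toSubmodule (Subalgebra.centralizer ℚ {wA k}) := by
    refine Submodule.span_le.mpr ?_
    rintro _ ⟨u, hu : u.deg = 1, rfl⟩ _ rfl
    rw [wA_eq_genA, genA_mul_genA, hu]
    simp [SurfGen.deg]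
  exact (Subalgebra.mem_centralizer_iff ℚ).mp (hle hx) _ rfl

lemma xA_zero : xA (g := g) (0 : Fin n) = genA (.a 0 0) := by
  rw [xA, gX, if_neg (by simp)]
  rfl

lemma yA_zero : yA (g := g) (0 : Fin n) = genA (.b 0 0) := by
  rw [yA, gY, if_neg (by simp)]
  rfl

lemma xA_of_ne_zero {k : Fin n} (hk : k ≠ 0) : xA (g := g) k = genA (.a k 0) - xA 0 := by
  rw [xA, gX, if_pos ⟨rfl, hk⟩, map_sub, xA_zero]
  rfl

lemma yA_of_ne_zero {k : Fin n} (hk : k ≠ 0) : yA (g := g) k = genA (.b k 0) - yA 0 := by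
  rw [yA, gY, if_pos ⟨rfl, hk⟩, map_sub, yA_zero]
  rfl

lemma xA_mem_oddA (k : Fin n) : xA (g := g) k ∈ oddA n g := by
  rcases eq_or_ne k 0 with rfl | hk
  · rw [xA_zero]
    exact genA_mem_oddA rfl
  · rw [xA_of_ne_zero hk, xA_zero]
    exact sub_mem (genA_mem_oddA rfl) (genA_mem_oddA rfl)

lemma yA_mem_oddA (k : Fin n) : yA (g := g) k ∈ oddA n g := by
  rcases eq_or_ne k 0 with rfl | hk
  · rw [yA_zero]
    exact genA_mem_oddA rfl
  · rw [yA_of_ne_zero hk, yA_zero]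
    exact sub_mem (genA_mem_oddA rfl) (genA_mem_oddA rfl)

lemma xA_zero_mul_self : xA (g := g) (0 : Fin n) * xA 0 = 0 := by
  rw [xA_zero, genA_a_mul_genA_a_self]

lemma yA_zero_mul_self : yA (g := g) (0 : Fin n) * yA 0 = 0 := by
  rw [yA_zero, genA_b_mul_genA_b_self]

lemma xA_zero_mul_yA_zero : xA (g := g) (0 : Fin n) * yA 0 = wA 0 := by
  rw [xA_zero, yA_zero, genA_a_mul_genA_b_self]

lemma wA_zero_mul_xA_zero : wA (g := g) (0 : Fin n) * xA 0 = 0 := by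
  rw [(commute_wA_of_mem_oddA 0 (xA_mem_oddA 0)).eq, ← xA_zero_mul_yA_zero, ← mul_assoc,
    xA_zero_mul_self, zero_mul]

lemma wA_zero_mul_yA_zero : wA (g := g) (0 : Fin n) * yA 0 = 0 := by
  rw [← xA_zero_mul_yA_zero, mul_assoc, yA_zero_mul_self, mul_zero]

noncomputable def crossA (u v : SurfA n g) : SurfA n g :=
  yA 0 * u - xA 0 * v

lemma xA_mul_yA {k : Fin n} (hk : k ≠ 0) :
    xA (g := g) k * yA k = wA k - wA 0 + crossA (xA k) (yA k) := by
  have h : (xA k + xA 0) * (yA k + yA 0) = wA (g := g) k := by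
    rw [eq_sub_iff_add_eq.mp (xA_of_ne_zero hk), eq_sub_iff_add_eq.mp (yA_of_ne_zero hk),
      genA_a_mul_genA_b_self]
  rw [add_mul, mul_add, mul_add, xA_zero_mul_yA_zero,
    mul_eq_neg_mul_of_mem_oddA (xA_mem_oddA k) (yA_mem_oddA 0)] at h
  rw [crossA, ← h]
  abel

lemma wA_mul_wA (hg : 2 ≤ g) (k l : Fin n) : wA (g := g) k * wA l = 0 := by
  set p : Fin g := ⟨1, hg⟩
  have hp : p ≠ 0 := by simp [p, Fin.ext_iff]
  rw [← genA_a_mul_genA_b_self k p, ← genA_a_mul_genA_b_self l p, ← mul_assoc,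
    mul_mul_eq_neg_mul_mul_of_mem_oddA (genA (.a k p)) (genA_mem_oddA (u := .b k p) rfl)
      (genA_mem_oddA (u := .a l p) rfl),
    genA_a_mul_genA_a_eq_zero hp, zero_mul, neg_zero, zero_mul]

lemma wA_zero_mul_crossA (u v : SurfA n g) : wA 0 * crossA u v = 0 := by
  rw [crossA, mul_sub, ← mul_assoc, ← mul_assoc, wA_zero_mul_yA_zero, wA_zero_mul_xA_zero,
    zero_mul, zero_mul, sub_zero]

lemma commute_wA_crossA (k : Fin n) {u v : SurfA n g} (hu : u ∈ oddA n g) (hv : v ∈ oddA n g) :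
    Commute (wA k) (crossA u v) :=
  ((commute_wA_of_mem_oddA k (yA_mem_oddA 0)).mul_right (commute_wA_of_mem_oddA k hu)).sub_right
    ((commute_wA_of_mem_oddA k (xA_mem_oddA 0)).mul_right (commute_wA_of_mem_oddA k hv))

lemma crossA_mul_crossA {u v u' v' : SurfA n g} (hu : u ∈ oddA n g) (hv : v ∈ oddA n g) :
    crossA u v * crossA u' v' = wA 0 * (v * u' - u * v') := by
  have hx := xA_mem_oddA (g := g) (0 : Fin n)
  have hy := yA_mem_oddA (g := g) (0 : Fin n)
  have hyy : yA 0 * u * yA 0 = 0 := by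
    rw [mul_mul_eq_neg_mul_mul_of_mem_oddA _ hu hy, yA_zero_mul_self, zero_mul, neg_zero]
  have hyx : yA 0 * u * xA 0 = wA 0 * u := by
    rw [mul_mul_eq_neg_mul_mul_of_mem_oddA _ hu hx, mul_eq_neg_mul_of_mem_oddA hy hx,
      xA_zero_mul_yA_zero, neg_mul, neg_neg]
  have hxy : xA 0 * v * yA 0 = -(wA 0 * v) := by
    rw [mul_mul_eq_neg_mul_mul_of_mem_oddA _ hv hy, xA_zero_mul_yA_zero]
  have hxx : xA 0 * v * xA 0 = 0 := by
    rw [mul_mul_eq_neg_mul_mul_of_mem_oddA _ hv hx, xA_zero_mul_self, zero_mul, neg_zero]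
  calc crossA u v * crossA u' v'
      = yA 0 * u * yA 0 * u' - yA 0 * u * xA 0 * v'
          - (xA 0 * v * yA 0 * u' - xA 0 * v * xA 0 * v') := by rw [crossA, crossA]; noncomm_ring
    _ = wA 0 * (v * u' - u * v') := by rw [hyy, hyx, hxy, hxx]; noncomm_ring

lemma wA_sub_add_crossA_mul_wA_sub_add_crossA (hg : 2 ≤ g) (k l : Fin n) {u v : SurfA n g}
    (hu : u ∈ oddA n g) (hv : v ∈ oddA n g) (u' v' : SurfA n g) :
    (wA k - wA 0 + crossA u v) * (wA l - wA 0 + crossA u' v') =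
      wA k * crossA u' v' + crossA u v * wA l + crossA u v * crossA u' v' := by
  rw [add_mul, mul_add, mul_add, sub_mul (wA k) (wA 0) (crossA u' v'), wA_zero_mul_crossA,
    mul_sub (crossA u v) (wA l) (wA 0), ← (commute_wA_crossA 0 hu hv).eq, wA_zero_mul_crossA,
    sub_mul, mul_sub, mul_sub, wA_mul_wA hg, wA_mul_wA hg, wA_mul_wA hg, wA_mul_wA hg]
  abel

end

theorem stmt10_general (n g : ℕ) [NeZero n] [NeZero g] (hg : 2 ≤ g)
    (i j : Fin n) (hi : i ≠ 0) (hj : j ≠ 0) :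
    yA i * xA j * (xA i * yA j) =
      (yA 0 * wA i * xA j + yA 0 * xA i * wA j - xA 0 * wA i * yA j - xA 0 * yA i * wA j
        + wA 0 * (yA i * xA j) - wA 0 * (xA i * yA j) : SurfA n g) := by
  have hxi := xA_mem_oddA (g := g) i
  have hxj := xA_mem_oddA (g := g) j
  have hyi := yA_mem_oddA (g := g) i
  calc yA i * xA j * (xA i * yA j)
      = -(yA i * xA i * (xA j * yA j)) := by
        rw [← mul_assoc, mul_mul_eq_neg_mul_mul_of_mem_oddA _ hxj hxi]
        noncomm_ring
    _ = xA i * yA i * (xA j * yA j) := by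
        rw [mul_eq_neg_mul_of_mem_oddA hyi hxi, neg_mul, neg_neg]
    _ = wA i * crossA (xA j) (yA j) + crossA (xA i) (yA i) * wA j
          + crossA (xA i) (yA i) * crossA (xA j) (yA j) := by
        rw [xA_mul_yA hi, xA_mul_yA hj, wA_sub_add_crossA_mul_wA_sub_add_crossA hg i j hxi hyi]
    _ = _ := by
        rw [crossA_mul_crossA hxi hyi, crossA, crossA, mul_sub (wA i), ← mul_assoc, ← mul_assoc,
          (commute_wA_of_mem_oddA i (yA_mem_oddA 0)).eq,
          (commute_wA_of_mem_oddA i (xA_mem_oddA 0)).eq]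
        noncomm_ring

/-- In `A_g` (`g ≥ 2`, `n ≥ 3`), for distinct `i, j ∈ {2,…,n}`:
`y_i x_j (x_i y_j) = y_1 ω_i x_j + y_1 x_i ω_j - x_1 ω_i y_j - x_1 y_i ω_j
  + ω_1 y_i x_j - ω_1 x_i y_j`. -/
theorem stmt10 (n g : ℕ) [NeZero n] [NeZero g] (hn : 3 ≤ n) (hg : 2 ≤ g)
    (i j : Fin n) (hi : i ≠ 0) (hj : j ≠ 0) (hij : i ≠ j) :
    yA i * xA j * (xA i * yA j) =
      (yA 0 * wA i * xA j + yA 0 * xA i * wA j - xA 0 * wA i * yA j - xA 0 * yA i * wA j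
        + wA 0 * (yA i * xA j) - wA 0 * (xA i * yA j) : SurfA n g) :=
  stmt10_general n g hg i j hi hj
end

section
/- In the 2-fold tensor square of B_g (g ≥ 2, n ≥ 2), with c = a_1(2) ⊗ 1 − 1 ⊗ a_1(2) and d = b_1(2) ⊗ 1 − 1 ⊗ b_1(2), one has c·d·(x_1 ⊗ 1 − 1 ⊗ x_1)(y_1 ⊗ 1 − 1 ⊗ y_1) = 2 ω_1 ⊗ ω_1. -/
/-- The generator `u` placed in the left (`s = true`) or right (`s = false`) tensor factor. -/
noncomputable def fgen {n g : ℕ} (s : Bool) (u : SurfGen n g) :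
    FreeAlgebra ℚ (SurfGen n g ⊕ SurfGen n g) :=
  FreeAlgebra.ι ℚ (if s then Sum.inl u else Sum.inr u)

/-- `a_{i+1}(p+1)` in the factor `s`. -/
noncomputable def fA {n g : ℕ} (s : Bool) (i : Fin n) (p : Fin g) :
    FreeAlgebra ℚ (SurfGen n g ⊕ SurfGen n g) :=
  fgen s (SurfGen.a i p)

/-- `b_{i+1}(p+1)` in the factor `s`. -/
noncomputable def fB {n g : ℕ} (s : Bool) (i : Fin n) (p : Fin g) :
    FreeAlgebra ℚ (SurfGen n g ⊕ SurfGen n g) :=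
  fgen s (SurfGen.b i p)

/-- `ω_{i+1}` in the factor `s`. -/
noncomputable def fW {n g : ℕ} (s : Bool) (i : Fin n) :
    FreeAlgebra ℚ (SurfGen n g ⊕ SurfGen n g) :=
  fgen s (SurfGen.w i)

/-- `x_{i+1}(p+1)` in the factor `s`. -/
noncomputable def fX {n g : ℕ} [NeZero n] [NeZero g] (s : Bool) (i : Fin n) (p : Fin g) :
    FreeAlgebra ℚ (SurfGen n g ⊕ SurfGen n g) :=
  if p = 0 ∧ i ≠ 0 then fA s i p - fA s 0 p else fA s i p

/-- `y_{i+1}(p+1)` in the factor `s`. -/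
noncomputable def fY {n g : ℕ} [NeZero n] [NeZero g] (s : Bool) (i : Fin n) (p : Fin g) :
    FreeAlgebra ℚ (SurfGen n g ⊕ SurfGen n g) :=
  if p = 0 ∧ i ≠ 0 then fB s i p - fB s 0 p else fB s i p

/-- The embedding of the free algebra on one copy of the generators onto the factor `s`. -/
noncomputable def embSide {n g : ℕ} (s : Bool) :
    FreeAlgebra ℚ (SurfGen n g) →ₐ[ℚ] FreeAlgebra ℚ (SurfGen n g ⊕ SurfGen n g) :=
  FreeAlgebra.lift ℚ (fun u => fgen s u)

/-- The relations presenting the graded (Koszul-signed) tensor square `B_g ⊗ B_g`: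
the defining relations of `H^*(Σ_g^{×n}; ℚ)` in each tensor factor, the Koszul sign rule
between the two factors, and the relations defining `A_g` and `B_g` in each factor. -/
inductive TRel (n g : ℕ) [NeZero n] [NeZero g] :
    FreeAlgebra ℚ (SurfGen n g ⊕ SurfGen n g) → FreeAlgebra ℚ (SurfGen n g ⊕ SurfGen n g) → Prop
  | side (s : Bool) {x y : FreeAlgebra ℚ (SurfGen n g)} :
      SurfRel n g x y → TRel n g (embSide s x) (embSide s y)
  | cross (u v : SurfGen n g) :
      TRel n g (fgen false v * fgen true u)
        (((-1 : ℚ) ^ (u.deg * v.deg)) • (fgen true u * fgen false v))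
  | arel_xx (s : Bool) (i j : Fin n) (p q : Fin g) :
      i ≠ j → p ≠ 0 → q ≠ 0 → TRel n g (fX s i p * fX s j q) 0
  | arel_xy (s : Bool) (i j : Fin n) (p q : Fin g) :
      i ≠ j → p ≠ 0 → q ≠ 0 → TRel n g (fX s i p * fY s j q) 0
  | arel_yy (s : Bool) (i j : Fin n) (p q : Fin g) :
      i ≠ j → p ≠ 0 → q ≠ 0 → TRel n g (fY s i p * fY s j q) 0
  | brel (s : Bool) (i j : Fin n) :
      i ≠ 0 → j ≠ 0 → TRel n g (fX s i 0 * fY s j 0) 0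

/-- The graded tensor square `B_g ⊗ B_g`, presented by generators and relations. -/
def BTensorSq (n g : ℕ) [NeZero n] [NeZero g] : Type := RingQuot (TRel n g)

noncomputable instance (n g : ℕ) [NeZero n] [NeZero g] : Ring (BTensorSq n g) :=
  inferInstanceAs (Ring (RingQuot (TRel n g)))

noncomputable instance (n g : ℕ) [NeZero n] [NeZero g] : Algebra ℚ (BTensorSq n g) :=
  inferInstanceAs (Algebra ℚ (RingQuot (TRel n g)))

/-- The quotient map onto `B_g ⊗ B_g`. -/
noncomputable def mkT (n g : ℕ) [NeZero n] [NeZero g] :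
    FreeAlgebra ℚ (SurfGen n g ⊕ SurfGen n g) →ₐ[ℚ] BTensorSq n g :=
  RingQuot.mkAlgHom ℚ (TRel n g)

/-
Write `a = a_1(2)`, `b = b_1(2)`, `x = a_1(1)`, `y = b_1(1)`. The degree-one classes of both
tensor factors pairwise anticommute, so with `c = a ⊗ 1 - 1 ⊗ a` and likewise `d`, `e`, `f` for
`b`, `x`, `y`, one has `cdef = -(ce)(df)`. Since `ax = by = 0` in each factor,
`ce = -(a ⊗ x - x ⊗ a)` and `df = -(b ⊗ y - y ⊗ b)`. Multiplying out, `(a ⊗ x)(b ⊗ y)` and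
`(x ⊗ a)(y ⊗ b)` both equal `-ω₁ ⊗ ω₁`, while the mixed terms contain `ay = xb = 0`.
-/

namespace BTensorSq

variable {n g : ℕ} [NeZero n] [NeZero g]

/-- `u ⊗ 1 - 1 ⊗ u`. -/
noncomputable def genDiff (u : SurfGen n g) : BTensorSq n g :=
  mkT n g (fgen true u) - mkT n g (fgen false u)

theorem mkT_embSide_ι (s : Bool) (u : SurfGen n g) :
    mkT n g (embSide s (FreeAlgebra.ι ℚ u)) = mkT n g (fgen s u) := by
  rw [embSide, FreeAlgebra.lift_ι_apply]

theorem mkT_embSide_eq {s : Bool} {x y : FreeAlgebra ℚ (SurfGen n g)} (h : SurfRel n g x y) :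
    mkT n g (embSide s x) = mkT n g (embSide s y) :=
  RingQuot.mkAlgHom_rel ℚ (TRel.side s h)

theorem mkT_fgen_mul_fgen (s : Bool) (u v : SurfGen n g) :
    mkT n g (fgen s u) * mkT n g (fgen s v) =
      mkT n g (embSide s (FreeAlgebra.ι ℚ u * FreeAlgebra.ι ℚ v)) := by
  rw [map_mul, map_mul, mkT_embSide_ι, mkT_embSide_ι]

theorem mkT_fgen_a_mul_fgen_a (s : Bool) (i : Fin n) (p q : Fin g) :
    mkT n g (fgen s (.a i p)) * mkT n g (fgen s (.a i q)) = 0 := by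
  rw [mkT_fgen_mul_fgen, mkT_embSide_eq (SurfRel.aa i p q), map_zero, map_zero]

theorem mkT_fgen_b_mul_fgen_b (s : Bool) (i : Fin n) (p q : Fin g) :
    mkT n g (fgen s (.b i p)) * mkT n g (fgen s (.b i q)) = 0 := by
  rw [mkT_fgen_mul_fgen, mkT_embSide_eq (SurfRel.bb i p q), map_zero, map_zero]

theorem mkT_fgen_a_mul_fgen_b_self (s : Bool) (i : Fin n) (p : Fin g) :
    mkT n g (fgen s (.a i p)) * mkT n g (fgen s (.b i p)) = mkT n g (fgen s (.w i)) := by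
  rw [mkT_fgen_mul_fgen, mkT_embSide_eq (SurfRel.ab_eq i p), mkT_embSide_ι]

theorem mkT_fgen_a_mul_fgen_b_of_ne (s : Bool) (i : Fin n) {p q : Fin g} (h : p ≠ q) :
    mkT n g (fgen s (.a i p)) * mkT n g (fgen s (.b i q)) = 0 := by
  rw [mkT_fgen_mul_fgen, mkT_embSide_eq (SurfRel.ab_ne i p q h), map_zero, map_zero]

theorem mkT_fgen_false_mul_fgen_true (u v : SurfGen n g) :
    mkT n g (fgen false v) * mkT n g (fgen true u) =
      ((-1 : ℚ) ^ (u.deg * v.deg)) • (mkT n g (fgen true u) * mkT n g (fgen false v)) := by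
  have h := RingQuot.mkAlgHom_rel ℚ (TRel.cross (n := n) (g := g) u v)
  simp only [map_mul, map_smul] at h
  exact h

theorem mkT_fgen_mul_fgen_comm (s t : Bool) (u v : SurfGen n g) :
    mkT n g (fgen s u) * mkT n g (fgen t v) =
      ((-1 : ℚ) ^ (u.deg * v.deg)) • (mkT n g (fgen t v) * mkT n g (fgen s u)) := by
  have sign_sq : ((-1 : ℚ) ^ (u.deg * v.deg)) * (-1) ^ (u.deg * v.deg) = 1 := by
    rw [← mul_pow, neg_one_mul, neg_neg, one_pow]
  cases s <;> cases t
  case false.true =>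
    rw [mkT_fgen_false_mul_fgen_true, mul_comm u.deg]
  case true.false =>
    rw [mkT_fgen_false_mul_fgen_true, smul_smul, sign_sq, one_smul]
  all_goals
    rw [mkT_fgen_mul_fgen, mkT_fgen_mul_fgen, mkT_embSide_eq (SurfRel.koszul u v), map_smul,
      map_smul]

theorem mkT_fgen_anticomm {u v : SurfGen n g} (hu : u.deg = 1) (hv : v.deg = 1) (s t : Bool) :
    mkT n g (fgen s u) * mkT n g (fgen t v) = -(mkT n g (fgen t v) * mkT n g (fgen s u)) := by
  rw [mkT_fgen_mul_fgen_comm, hu, hv]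
  norm_num

theorem genDiff_anticomm {u v : SurfGen n g} (hu : u.deg = 1) (hv : v.deg = 1) :
    genDiff u * genDiff v = -(genDiff v * genDiff u) := by
  simp only [genDiff, sub_mul, mul_sub, mkT_fgen_anticomm hu hv]
  abel

theorem genDiff_mul_genDiff {u v : SurfGen n g} (hu : u.deg = 1) (hv : v.deg = 1)
    (h : ∀ s, mkT n g (fgen s u) * mkT n g (fgen s v) = 0) :
    genDiff u * genDiff v =
      -(mkT n g (fgen true u) * mkT n g (fgen false v) -
        mkT n g (fgen true v) * mkT n g (fgen false u)) := by
  rw [genDiff, genDiff, sub_mul, mul_sub, mul_sub, h, h, mkT_fgen_anticomm hu hv false true]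
  abel

theorem mkT_tensor_mul_tensor {u v u' v' : SurfGen n g} (hv : v.deg = 1) (hu' : u'.deg = 1) :
    mkT n g (fgen true u) * mkT n g (fgen false v) *
        (mkT n g (fgen true u') * mkT n g (fgen false v')) =
      -(mkT n g (fgen true u) * mkT n g (fgen true u') *
        (mkT n g (fgen false v) * mkT n g (fgen false v'))) := by
  rw [mul_assoc, ← mul_assoc (mkT n g (fgen false v)), mkT_fgen_anticomm hv hu']
  noncomm_ring

end BTensorSq

open BTensorSq in
theorem stmt16_general (n g : ℕ) [NeZero n] [NeZero g] (hg : 2 ≤ g) :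
    (mkT n g (fA true 0 (1 : Fin g)) - mkT n g (fA false 0 1)) *
        (mkT n g (fB true 0 (1 : Fin g)) - mkT n g (fB false 0 1)) *
        ((mkT n g (fA true 0 (0 : Fin g)) - mkT n g (fA false 0 0)) *
          (mkT n g (fB true 0 (0 : Fin g)) - mkT n g (fB false 0 0))) =
      2 * (mkT n g (fW true 0) * mkT n g (fW false 0)) := by
  have h10 : (1 : Fin g) ≠ 0 := mt Fin.one_eq_zero_iff.mp (by omega)
  unfold fA fB fW
  change genDiff (.a 0 1) * genDiff (.b 0 1) * (genDiff (.a 0 0) * genDiff (.b 0 0)) = _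
  have hce := genDiff_mul_genDiff rfl rfl
    (fun s => mkT_fgen_a_mul_fgen_a s (0 : Fin n) (1 : Fin g) 0)
  have hdf := genDiff_mul_genDiff rfl rfl
    (fun s => mkT_fgen_b_mul_fgen_b s (0 : Fin n) (1 : Fin g) 0)
  calc _ = -(genDiff (.a 0 1) * genDiff (.a 0 0) * (genDiff (.b 0 1) * genDiff (.b 0 0))) := by
        rw [mul_assoc, ← mul_assoc (genDiff (.b 0 1)), genDiff_anticomm (u := .b 0 1) rfl rfl]
        noncomm_ring
    _ = _ := by
        rw [hce, hdf, neg_mul_neg, sub_mul, mul_sub, mul_sub]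
        simp only [mkT_tensor_mul_tensor, SurfGen.deg.eq_1, SurfGen.deg.eq_2,
          mkT_fgen_a_mul_fgen_b_self, mkT_fgen_a_mul_fgen_b_of_ne _ _ h10,
          mkT_fgen_a_mul_fgen_b_of_ne _ _ h10.symm]
        noncomm_ring

/-- In the (Koszul-signed) tensor square of `B_g` (`g ≥ 2`, `n ≥ 2`), with
`c = a_1(2) ⊗ 1 - 1 ⊗ a_1(2)`, `d = b_1(2) ⊗ 1 - 1 ⊗ b_1(2)`, one has
`c · d · (x_1 ⊗ 1 - 1 ⊗ x_1)(y_1 ⊗ 1 - 1 ⊗ y_1) = 2 ω_1 ⊗ ω_1`. -/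
theorem stmt16 (n g : ℕ) [NeZero n] [NeZero g] (hn : 2 ≤ n) (hg : 2 ≤ g) :
    (mkT n g (fA true 0 (1 : Fin g)) - mkT n g (fA false 0 1)) *
        (mkT n g (fB true 0 (1 : Fin g)) - mkT n g (fB false 0 1)) *
        ((mkT n g (fA true 0 (0 : Fin g)) - mkT n g (fA false 0 0)) *
          (mkT n g (fB true 0 (0 : Fin g)) - mkT n g (fB false 0 0))) =
      2 * (mkT n g (fW true 0) * mkT n g (fW false 0)) :=
  stmt16_general n g hg
end
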